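/- arXiv:1704.03705 — 4 statements merged into one kernel-verified Lean document; each statement's English description precedes it below -/
import Mathlib

section
/- Let ζ ∈ (0,1) and k ≥ 1 be an integer. Then Γ((k+1)ζ) ≤ (1-ζ)^{-kζ} · Γ(kζ), where Γ is the Gamma function. -/
open Real Set MeasureTheory

namespace Real

theorem rpow_le_exp_mul {x a : ℝ} (hx : 0 ≤ x) (ha : 0 ≤ a) : x ^ a ≤ exp (a * x) :=
  calc x ^ a ≤ exp x ^ a := rpow_le_rpow hx (by linarith [add_one_le_exp x]) ha
    _ = exp (a * x) := by rw [← exp_mul, mul_comm]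

theorem integrableOn_rpow_mul_exp_neg_mul_Ioi {a r : ℝ} (ha : 0 < a) (hr : 0 < r) :
    IntegrableOn (fun t : ℝ ↦ t ^ (a - 1) * exp (-(r * t))) (Ioi 0) := by
  refine Integrable.of_integral_ne_zero ?_
  rw [integral_rpow_mul_exp_neg_mul_Ioi ha hr]
  positivity

/-- Shifting the argument by `a ∈ [0, 1)` is paid for by the factor `x ^ a ≤ exp (a * x)`, which
turns the Gamma integrand at `s + a` into that of `Gamma s` with the decay rate `1 - a`. -/
theorem Gamma_add_le_rpow_mul_Gamma {s a : ℝ} (hs : 0 < s) (ha₀ : 0 ≤ a) (ha₁ : a < 1) :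
    Gamma (s + a) ≤ (1 - a) ^ (-s) * Gamma s := by
  have hr : 0 < 1 - a := by linarith
  have integrand_le : ∀ x ∈ Ioi (0 : ℝ),
      exp (-x) * x ^ (s + a - 1) ≤ x ^ (s - 1) * exp (-((1 - a) * x)) := fun x (hx : 0 < x) ↦
    calc exp (-x) * x ^ (s + a - 1) = x ^ (s - 1) * (x ^ a * exp (-x)) := by
          rw [show s + a - 1 = s - 1 + a by ring, rpow_add hx]; ring
      _ ≤ x ^ (s - 1) * (exp (a * x) * exp (-x)) := by
          gcongr
          exact rpow_le_exp_mul hx.le ha₀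
      _ = x ^ (s - 1) * exp (-((1 - a) * x)) := by rw [← exp_add]; ring_nf
  calc Gamma (s + a) = ∫ x in Ioi 0, exp (-x) * x ^ (s + a - 1) := Gamma_eq_integral (by linarith)
    _ ≤ ∫ x in Ioi 0, x ^ (s - 1) * exp (-((1 - a) * x)) :=
      setIntegral_mono_on (GammaIntegral_convergent (by linarith))
        (integrableOn_rpow_mul_exp_neg_mul_Ioi hs hr) measurableSet_Ioi integrand_le
    _ = (1 - a) ^ (-s) * Gamma s := by
      rw [integral_rpow_mul_exp_neg_mul_Ioi hs hr, one_div, inv_rpow hr.le, rpow_neg hr.le]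

end Real

theorem gamma_growth (ζ : ℝ) (hζ0 : 0 < ζ) (hζ1 : ζ < 1) (k : ℕ) (hk : 1 ≤ k) :
    Real.Gamma (((k : ℝ) + 1) * ζ) ≤ (1 - ζ) ^ (-((k : ℝ) * ζ)) * Real.Gamma ((k : ℝ) * ζ) := by
  have hkζ : 0 < (k : ℝ) * ζ := mul_pos (by exact_mod_cast hk) hζ0
  rw [add_one_mul]
  exact Gamma_add_le_rpow_mul_Gamma hkζ hζ0.le hζ1
end

section
/- Let α ∈ (0,2), γ ≥ 0, and let ν₀ be an α-stable Lévy measure (polar decomposition with finite spherical measure μ₀) that is a γ-measure at the unit sphere, i.e., ν₀(B(x,r)) ≤ m₀ r^γ for all |x| = 1 and 0 < r < 1/2. Set m₁ = max{m₀, 2^γ |μ₀| / α}. Then for every Borel set A ⊂ ℝ^d, ν₀(A) ≤ m₁ · δ(A)^{-α-γ} · diam(A)^γ, where δ(A) = dist(A, 0) and diam(A) is the diameter of A. -/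
/-!
Scaling `s ↦ c s` in the radial integral gives `ν (c • A) = c ^ (-α) ν A`, which transports the
bound `ν (B(x, r)) ≤ m₀ r ^ γ` from centres on the unit sphere to any centre `x ≠ 0`:
`ν (B(x, r)) ≤ m₀ ‖x‖ ^ (-(α + γ)) r ^ γ` for `r < ‖x‖ / 2`. A set `A` with `diam A < δ(A) / 2`
lies in such a ball around any of its points for every `r > diam A`; let `r ↓ diam A`.
Otherwise `diam A ≥ δ(A) / 2`, and the tail bound `ν {‖x‖ ≥ δ} ≤ |μ₀| δ ^ (-α) / α` already has
the required form. When `δ(A) = 0` the right-hand side is infinite unless `A ⊆ {0}`, which is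
`ν`-null.
-/

open MeasureTheory Set Filter Topology Metric ENNReal Pointwise

theorem lintegral_Ioi_comp_mul_left {c : ℝ} (hc : 0 < c) (u : ℝ → ℝ≥0∞) :
    ∫⁻ s in Ioi 0, u s = ∫⁻ t in Ioi 0, ENNReal.ofReal c * u (c * t) := by
  simpa [image_const_mul_Ioi_zero hc] using
    lintegral_image_eq_lintegral_deriv_mul_of_monotoneOn (measurableSet_Ioi (a := 0))
      (fun t _ => ((hasDerivAt_id t).const_mul c).hasDerivWithinAt.congr_deriv (mul_one c))
      (fun _ _ _ _ h => mul_le_mul_of_nonneg_left h hc.le) u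

theorem lintegral_Ici_rpow_of_lt {a c : ℝ} (ha : a < -1) (hc : 0 < c) :
    ∫⁻ t in Ici c, ENNReal.ofReal (t ^ a) = ENNReal.ofReal (-c ^ (a + 1) / (a + 1)) := by
  rw [← setLIntegral_congr Ioi_ae_eq_Ici, ← integral_Ioi_rpow_of_lt ha hc,
    ofReal_integral_eq_lintegral_ofReal (integrableOn_Ioi_rpow_of_lt ha hc)
      (ae_restrict_of_forall_mem measurableSet_Ioi fun t ht =>
        (Real.rpow_pos_of_pos (hc.trans ht) _).le)]

theorem ofReal_mul_rpow_neg_div_le {M m α γ δ : ℝ} (hM : 0 ≤ M) (hα : 0 < α) (hδ : 0 < δ)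
    (hm : 2 ^ γ * M / α ≤ m) :
    ENNReal.ofReal M * ENNReal.ofReal (δ ^ (-α) / α)
      ≤ ENNReal.ofReal m * ENNReal.ofReal δ ^ (-(α + γ)) * ENNReal.ofReal (δ / 2) ^ γ := by
  have h2γ : 0 < (2 : ℝ) ^ γ := by positivity
  have hm0 : 0 ≤ m := le_trans (by positivity) hm
  have hscale : δ ^ (-(α + γ)) * (δ / 2) ^ γ = δ ^ (-α) / 2 ^ γ := by
    rw [Real.div_rpow hδ.le zero_le_two, neg_add, Real.rpow_add hδ, Real.rpow_neg hδ.le γ]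
    field_simp
  rw [← ENNReal.ofReal_mul hM, ENNReal.ofReal_rpow_of_pos hδ,
    ENNReal.ofReal_rpow_of_pos (half_pos hδ), ← ENNReal.ofReal_mul hm0,
    ← ENNReal.ofReal_mul (by positivity), mul_assoc, hscale]
  apply ENNReal.ofReal_le_ofReal
  calc M * (δ ^ (-α) / α) = 2 ^ γ * M / α * (δ ^ (-α) / 2 ^ γ) := by field_simp
    _ ≤ m * (δ ^ (-α) / 2 ^ γ) := by gcongr

theorem le_ofReal_mul_rpow_of_forall_Ioo {a : ℝ≥0∞} {K D R γ : ℝ} (hγ : 0 ≤ γ) (hDR : D < R)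
    (h : ∀ r ∈ Ioo D R, a ≤ ENNReal.ofReal (K * r ^ γ)) : a ≤ ENNReal.ofReal (K * D ^ γ) := by
  have hlim : Tendsto (fun r => ENNReal.ofReal (K * r ^ γ)) (𝓝[>] D)
      (𝓝 (ENNReal.ofReal (K * D ^ γ))) :=
    (ENNReal.continuous_ofReal.continuousAt.comp
      ((Real.continuousAt_rpow_const D γ (Or.inr hγ)).const_mul K)).tendsto.mono_left
      nhdsWithin_le_nhds
  exact ge_of_tendsto hlim (eventually_of_mem (Ioo_mem_nhdsGT hDR) h)

theorem subset_singleton_of_ediam_eq_zero {X : Type*} [MetricSpace X] {x : X} {A : Set X}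
    (hdiam : ediam A = 0) (hx : infDist x A = 0) : A ⊆ {x} := fun y hy => by
  rw [(ediam_eq_zero_iff.1 hdiam).eq_singleton_of_mem hy, infDist_singleton, dist_eq_zero] at hx
  exact hx.symm

section

variable {E : Type*} [NormedAddCommGroup E] [NormedSpace ℝ E] [MeasurableSpace E]

def IsStableLevyMeasure (α : ℝ) (σ ν : Measure E) : Prop :=
  ∀ A : Set E, MeasurableSet A → ν A = ∫⁻ θ, (∫⁻ s in Ioi (0 : ℝ),
    A.indicator (fun _ => ENNReal.ofReal (s ^ (-1 - α))) (s • θ)) ∂σ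

namespace IsStableLevyMeasure

variable {α m₀ γ : ℝ} {σ ν : Measure E}

theorem measure_smul [BorelSpace E] (hν : IsStableLevyMeasure α σ ν) {c : ℝ} (hc : 0 < c)
    {A : Set E} (hA : MeasurableSet A) : ν (c • A) = ENNReal.ofReal (c ^ (-α)) * ν A := by
  have hpow : ∀ t, 0 < t → c * (c * t) ^ (-1 - α) = c ^ (-α) * t ^ (-1 - α) := fun t ht => by
    rw [Real.mul_rpow hc.le ht.le, ← mul_assoc, mul_comm c, ← Real.rpow_add_one hc.ne']
    ring_nf
  rw [hν _ (hA.const_smul₀ c), hν _ hA, ← lintegral_const_mul' _ _ ENNReal.ofReal_ne_top]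
  refine lintegral_congr fun θ => ?_
  rw [lintegral_Ioi_comp_mul_left hc, ← lintegral_const_mul' _ _ ENNReal.ofReal_ne_top]
  refine setLIntegral_congr_fun measurableSet_Ioi fun t ht => ?_
  rw [mul_smul]
  by_cases htθ : t • θ ∈ A
  · rw [indicator_of_mem (smul_mem_smul_set htθ), indicator_of_mem htθ,
      ← ENNReal.ofReal_mul hc.le, ← ENNReal.ofReal_mul (by positivity), hpow t ht]
  · rw [indicator_of_notMem (by rwa [smul_mem_smul_set_iff₀ hc.ne']), indicator_of_notMem htθ,
      mul_zero, mul_zero]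

theorem measure_singleton_zero [MeasurableSingletonClass E] (hν : IsStableLevyMeasure α σ ν)
    (hσ : ∀ᵐ θ ∂σ, θ ≠ 0) : ν {0} = 0 := by
  rw [hν _ (measurableSet_singleton 0)]
  refine (lintegral_congr_ae (hσ.mono fun θ hθ => ?_)).trans lintegral_zero
  exact setLIntegral_eq_zero measurableSet_Ioi fun s hs =>
    indicator_of_notMem (show s • θ ∉ ({0} : Set E) from smul_ne_zero (ne_of_gt hs) hθ) _

theorem measure_le_of_forall_le_norm (hν : IsStableLevyMeasure α σ ν) (hσ : ∀ᵐ θ ∂σ, ‖θ‖ = 1)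
    (hα : 0 < α) {δ : ℝ} (hδ : 0 < δ) {A : Set E} (hA : MeasurableSet A)
    (hAδ : ∀ x ∈ A, δ ≤ ‖x‖) : ν A ≤ σ univ * ENNReal.ofReal (δ ^ (-α) / α) := by
  have hray : ∀ θ, ‖θ‖ = 1 → ∀ s ∈ Ioi (0 : ℝ),
      A.indicator (fun _ => ENNReal.ofReal (s ^ (-1 - α))) (s • θ)
        ≤ (Ici δ).indicator (fun s => ENNReal.ofReal (s ^ (-1 - α))) s := fun θ hθ s hs => by
    by_cases hsθ : s • θ ∈ A
    · have hδs : δ ≤ s := by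
        simpa [norm_smul, hθ, abs_of_pos (mem_Ioi.1 hs)] using hAδ _ hsθ
      rw [indicator_of_mem hsθ, indicator_of_mem (mem_Ici.2 hδs)]
    · simp [indicator_of_notMem hsθ]
  have htail : ∫⁻ s in Ici δ, ENNReal.ofReal (s ^ (-1 - α)) = ENNReal.ofReal (δ ^ (-α) / α) := by
    rw [lintegral_Ici_rpow_of_lt (by linarith) hδ, show -1 - α + 1 = -α by ring, div_neg,
      neg_div, neg_neg]
  rw [hν A hA, mul_comm, ← lintegral_const]
  refine lintegral_mono_ae (hσ.mono fun θ hθ => ?_)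
  calc _ ≤ ∫⁻ s in Ioi 0, (Ici δ).indicator (fun s => ENNReal.ofReal (s ^ (-1 - α))) s :=
        setLIntegral_mono' measurableSet_Ioi (hray θ hθ)
    _ ≤ ∫⁻ s, (Ici δ).indicator (fun s => ENNReal.ofReal (s ^ (-1 - α))) s :=
        setLIntegral_le_lintegral _ _
    _ = _ := by rw [lintegral_indicator measurableSet_Ici, htail]

theorem measure_ball_le [BorelSpace E] (hν : IsStableLevyMeasure α σ ν)
    (hgam : ∀ x : E, ‖x‖ = 1 → ∀ r : ℝ, 0 < r → r < 1 / 2 →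
      ν (ball x r) ≤ ENNReal.ofReal (m₀ * r ^ γ))
    {x : E} (hx : x ≠ 0) {r : ℝ} (hr : 0 < r) (hrx : r < ‖x‖ / 2) :
    ν (ball x r) ≤ ENNReal.ofReal (m₀ * ‖x‖ ^ (-(α + γ)) * r ^ γ) := by
  set c := ‖x‖
  have hc : 0 < c := norm_pos_iff.2 hx
  have hball : ball x r = c • ball (c⁻¹ • x) (r / c) := by
    rw [_root_.smul_ball hc.ne', smul_inv_smul₀ hc.ne', Real.norm_of_nonneg hc.le,
      mul_div_cancel₀ _ hc.ne']
  have hunit : ‖c⁻¹ • x‖ = 1 := by rw [norm_smul, norm_inv, norm_norm, inv_mul_cancel₀ hc.ne']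
  calc ν (ball x r) = ENNReal.ofReal (c ^ (-α)) * ν (ball (c⁻¹ • x) (r / c)) := by
        rw [hball, hν.measure_smul hc measurableSet_ball]
    _ ≤ ENNReal.ofReal (c ^ (-α)) * ENNReal.ofReal (m₀ * (r / c) ^ γ) := by
        gcongr
        exact hgam _ hunit _ (by positivity) (by rw [div_lt_iff₀ hc]; linarith)
    _ = ENNReal.ofReal (m₀ * c ^ (-(α + γ)) * r ^ γ) := by
        rw [← ENNReal.ofReal_mul (by positivity), Real.div_rpow hr.le hc.le, neg_add,
          Real.rpow_add hc, Real.rpow_neg hc.le γ]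
        congr 1
        field_simp

theorem measure_le_of_ediam_lt [BorelSpace E] (hν : IsStableLevyMeasure α σ ν)
    (hgam : ∀ x : E, ‖x‖ = 1 → ∀ r : ℝ, 0 < r → r < 1 / 2 →
      ν (ball x r) ≤ ENNReal.ofReal (m₀ * r ^ γ))
    (hm₀ : 0 ≤ m₀) (hαγ : 0 ≤ α + γ) (hγ : 0 ≤ γ) {δ : ℝ} (hδ : 0 < δ) {A : Set E}
    (hAδ : ∀ x ∈ A, δ ≤ ‖x‖) (hdiam : ediam A < ENNReal.ofReal (δ / 2)) :
    ν A ≤ ENNReal.ofReal m₀ * ENNReal.ofReal δ ^ (-(α + γ)) * ediam A ^ γ := by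
  rcases A.eq_empty_or_nonempty with rfl | ⟨x₀, hx₀A⟩
  · simp
  set D := (ediam A).toReal
  have hD : ediam A = ENNReal.ofReal D := (ofReal_toReal hdiam.ne_top).symm
  have hDδ : D < δ / 2 := by rwa [hD, ENNReal.ofReal_lt_ofReal_iff (half_pos hδ)] at hdiam
  have hx₀δ := hAδ x₀ hx₀A
  have hx₀ : x₀ ≠ 0 := norm_pos_iff.1 (hδ.trans_le hx₀δ)
  have hball : ∀ r ∈ Ioo D (δ / 2), ν A ≤ ENNReal.ofReal (m₀ * δ ^ (-(α + γ)) * r ^ γ) := by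
    intro r hr
    have hr0 : 0 < r := toReal_nonneg.trans_lt hr.1
    have hA : A ⊆ ball x₀ r := fun y hy => mem_ball.2 <| edist_lt_ofReal.1 <|
      (edist_le_ediam_of_mem hy hx₀A).trans_lt (hD ▸ (ENNReal.ofReal_lt_ofReal_iff hr0).2 hr.1)
    calc ν A ≤ ν (ball x₀ r) := measure_mono hA
      _ ≤ ENNReal.ofReal (m₀ * ‖x₀‖ ^ (-(α + γ)) * r ^ γ) :=
        hν.measure_ball_le hgam hx₀ hr0 (by linarith [hr.2])
      _ ≤ ENNReal.ofReal (m₀ * δ ^ (-(α + γ)) * r ^ γ) := by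
        gcongr ENNReal.ofReal (m₀ * ?_ * r ^ γ)
        exact Real.rpow_le_rpow_of_nonpos hδ hx₀δ (neg_nonpos.2 hαγ)
  calc ν A ≤ ENNReal.ofReal (m₀ * δ ^ (-(α + γ)) * D ^ γ) :=
        le_ofReal_mul_rpow_of_forall_Ioo hγ hDδ hball
    _ = _ := by
        rw [hD, ENNReal.ofReal_mul (by positivity), ENNReal.ofReal_mul hm₀,
          ENNReal.ofReal_rpow_of_pos hδ, ENNReal.ofReal_rpow_of_nonneg toReal_nonneg hγ]

end IsStableLevyMeasure

end

theorem gamma_measure_estimate_general (d : ℕ) (α γ m₀ : ℝ) (hα0 : 0 < α)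
    (hγ : 0 ≤ γ) (hm₀ : 0 < m₀)
    (μ₀ ν₀ : Measure (EuclideanSpace ℝ (Fin d))) [IsFiniteMeasure μ₀]
    (hsupp : ∀ᵐ θ ∂μ₀, ‖θ‖ = 1)
    (hν : ∀ A : Set (EuclideanSpace ℝ (Fin d)), MeasurableSet A →
      ν₀ A = ∫⁻ θ, (∫⁻ s in Set.Ioi (0 : ℝ),
        A.indicator (fun _ => ENNReal.ofReal (s ^ (-1 - α))) (s • θ)) ∂μ₀)
    (hgam : ∀ x : EuclideanSpace ℝ (Fin d), ‖x‖ = 1 → ∀ r : ℝ, 0 < r → r < 1 / 2 →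
      ν₀ (Metric.ball x r) ≤ ENNReal.ofReal (m₀ * r ^ γ)) :
    ∀ A : Set (EuclideanSpace ℝ (Fin d)), MeasurableSet A →
      ν₀ A ≤ ENNReal.ofReal (max m₀ (2 ^ γ * (μ₀ Set.univ).toReal / α)) *
        (ENNReal.ofReal (Metric.infDist 0 A)) ^ (-(α + γ)) * (EMetric.diam A) ^ γ := by
  intro A hA
  replace hν : IsStableLevyMeasure α μ₀ ν₀ := hν
  obtain ⟨δ, hδ⟩ : ∃ δ, infDist 0 A = δ := ⟨_, rfl⟩
  have hAδ : ∀ x ∈ A, δ ≤ ‖x‖ := fun x hx => by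
    simpa [hδ] using infDist_le_dist_of_mem (x := 0) hx
  change _ ≤ _ * _ * ediam A ^ γ
  rw [hδ]
  rcases (hδ ▸ infDist_nonneg : 0 ≤ δ).eq_or_lt with rfl | hδ0
  · rcases eq_or_ne (ediam A) 0 with hdiam | hdiam
    · have hA0 : ν₀ A = 0 := measure_mono_null (subset_singleton_of_ediam_eq_zero hdiam hδ)
        (hν.measure_singleton_zero (hsupp.mono fun θ hθ => norm_ne_zero_iff.1 (hθ ▸ one_ne_zero)))
      rw [hA0]
      exact zero_le
    · rw [ENNReal.ofReal_zero, ENNReal.zero_rpow_of_neg (by linarith),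
        ENNReal.mul_top (ENNReal.ofReal_pos.2 (lt_max_of_lt_left hm₀)).ne',
        ENNReal.top_mul (ENNReal.rpow_pos_of_nonneg (pos_iff_ne_zero.2 hdiam) hγ).ne']
      exact le_top
  · rcases lt_or_ge (ediam A) (ENNReal.ofReal (δ / 2)) with hsmall | hlarge
    · calc ν₀ A ≤ ENNReal.ofReal m₀ * ENNReal.ofReal δ ^ (-(α + γ)) * ediam A ^ γ :=
            hν.measure_le_of_ediam_lt hgam hm₀.le (by linarith) hγ hδ0 hAδ hsmall
        _ ≤ _ := by gcongr; exact le_max_left _ _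
    · calc ν₀ A ≤ μ₀ univ * ENNReal.ofReal (δ ^ (-α) / α) :=
            hν.measure_le_of_forall_le_norm hsupp hα0 hδ0 hA hAδ
        _ = ENNReal.ofReal (μ₀ univ).toReal * ENNReal.ofReal (δ ^ (-α) / α) := by
            rw [ofReal_toReal (measure_ne_top _ _)]
        _ ≤ _ := ofReal_mul_rpow_neg_div_le toReal_nonneg hα0 hδ0 (le_max_right _ _)
        _ ≤ _ := by gcongr

theorem gamma_measure_estimate (d : ℕ) (α γ m₀ : ℝ) (hα0 : 0 < α) (hα2 : α < 2)
    (hγ : 0 ≤ γ) (hm₀ : 0 < m₀)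
    (μ₀ ν₀ : Measure (EuclideanSpace ℝ (Fin d))) [IsFiniteMeasure μ₀]
    (hsupp : ∀ᵐ θ ∂μ₀, ‖θ‖ = 1)
    (hν : ∀ A : Set (EuclideanSpace ℝ (Fin d)), MeasurableSet A →
      ν₀ A = ∫⁻ θ, (∫⁻ s in Set.Ioi (0 : ℝ),
        A.indicator (fun _ => ENNReal.ofReal (s ^ (-1 - α))) (s • θ)) ∂μ₀)
    (hgam : ∀ x : EuclideanSpace ℝ (Fin d), ‖x‖ = 1 → ∀ r : ℝ, 0 < r → r < 1 / 2 →
      ν₀ (Metric.ball x r) ≤ ENNReal.ofReal (m₀ * r ^ γ)) :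
    ∀ A : Set (EuclideanSpace ℝ (Fin d)), MeasurableSet A →
      ν₀ A ≤ ENNReal.ofReal (max m₀ (2 ^ γ * (μ₀ Set.univ).toReal / α)) *
        (ENNReal.ofReal (Metric.infDist 0 A)) ^ (-(α + γ)) * (EMetric.diam A) ^ γ :=
  gamma_measure_estimate_general d α γ m₀ hα0 hγ hm₀ μ₀ ν₀ hsupp hν hgam
end

section
/- Let d ≥ 1, α ∈ (0,2), and β ∈ (d, d+2). There exists a constant c ≥ 1 such that for all x ∈ ℝ^d and 0 < s < t: c^{-1} G_t^{(β)}(x) ≤ ∫_{ℝ^d} G_{t-s}^{(β)}(x-z) G_s^{(β)}(z) dz ≤ c G_t^{(β)}(x), where G_t^{(β)}(x) = t^{-d/α} max(|x|/t^{1/α}, 1)^{-β}. -/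
open MeasureTheory

noncomputable def G (d : ℕ) (α β t : ℝ) (x : EuclideanSpace ℝ (Fin d)) : ℝ :=
  t ^ (-(d : ℝ) / α) * (max (‖x‖ / t ^ (1 / α)) 1) ^ (-β)

/-!
In homogeneous form `G_t(x) = t^((β-d)/α) · max(|x|, t^(1/α))^(-β)`. The mass of `G_t` is finite
(as `β > d`) and does not depend on `t`. The convolution is symmetric in the two times, so we may
assume `s ≤ t - s`, i.e. `t - s ≥ t/2`.

Lower bound: on the ball `|z| ≤ s^(1/α)`, of volume `≍ s^(d/α)`, the factor `G_s(z)` equals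
`s^(-d/α)` and `G_{t-s}(x - z) ≳ G_t(x)`.

Upper bound: for every `z`, the smaller of `a = G_{t-s}(x - z)` and `b = G_s(z)` is `≲ G_t(x)`:
if `|x| ≤ t^(1/α)` because `t - s ≥ t/2`, otherwise because `|x - z|` or `|z|` is at least `|x|/2`.
Then `ab ≤ min(a, b) (a + b)` bounds the convolution by `G_t(x)` times twice the mass.
-/

open Real Metric Module
open scoped ENNReal

local notation "ℝ^" n:max => EuclideanSpace ℝ (Fin n)

theorem MeasureTheory.Measure.lintegral_comp_inv_smul_of_pos {E : Type*} [NormedAddCommGroup E]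
    [NormedSpace ℝ E] [MeasurableSpace E] [BorelSpace E] [FiniteDimensional ℝ E]
    (μ : Measure E) [μ.IsAddHaarMeasure] (f : E → ℝ≥0∞) {R : ℝ} (hR : 0 < R) :
    ∫⁻ x, f (R⁻¹ • x) ∂μ = ENNReal.ofReal (R ^ finrank ℝ E) * ∫⁻ x, f x ∂μ := by
  have hR' : R⁻¹ ≠ 0 := inv_ne_zero hR.ne'
  have := lintegral_map_equiv f (MeasurableEquiv.smul₀ R⁻¹ hR' : E ≃ᵐ E) (μ := μ)
  rw [MeasurableEquiv.coe_smul₀] at this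
  rw [← this, Measure.map_addHaar_smul μ hR', lintegral_smul_measure, inv_pow, inv_inv,
    abs_of_pos (pow_pos hR _), smul_eq_mul]

section G

variable {d : ℕ} {α β s t u v : ℝ}

theorem continuous_G (d : ℕ) (α β t : ℝ) : Continuous (G d α β t) := by
  refine continuous_const.mul ((continuous_norm.div_const _).max continuous_const |>.rpow_const ?_)
  exact fun x => .inl (one_pos.trans_le (le_max_right _ _)).ne'

theorem G_nonneg (ht : 0 ≤ t) (x : ℝ^d) : 0 ≤ G d α β t x :=
  mul_nonneg (rpow_nonneg ht _) (rpow_nonneg (zero_le_one.trans (le_max_right _ _)) _)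

theorem G_le_rpow (hβ : 0 ≤ β) (ht : 0 ≤ t) (x : ℝ^d) :
    G d α β t x ≤ t ^ (-(d : ℝ) / α) :=
  mul_le_of_le_one_right (rpow_nonneg ht _)
    (rpow_le_one_of_one_le_of_nonpos (le_max_right _ _) (neg_nonpos.2 hβ))

theorem G_eq_of_norm_le (ht : 0 < t) {x : ℝ^d} (hx : ‖x‖ ≤ t ^ (1 / α)) :
    G d α β t x = t ^ (-(d : ℝ) / α) := by
  rw [G, max_eq_right ((div_le_one (rpow_pos_of_pos ht _)).2 hx), one_rpow, mul_one]

theorem G_eq_rpow_mul_max_rpow (ht : 0 < t) (x : ℝ^d) :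
    G d α β t x = t ^ ((β - d) / α) * max ‖x‖ (t ^ (1 / α)) ^ (-β) := by
  have hr : 0 < t ^ (1 / α) := rpow_pos_of_pos ht _
  have hM : 0 ≤ max ‖x‖ (t ^ (1 / α)) := hr.le.trans (le_max_right _ _)
  have h1 : max (‖x‖ / t ^ (1 / α)) 1 = max ‖x‖ (t ^ (1 / α)) / t ^ (1 / α) := by
    rw [← max_div_div_right hr.le, div_self hr.ne']
  rw [G, h1, div_rpow hM hr.le, ← rpow_mul ht.le,
    div_eq_mul_inv _ (t ^ _), ← rpow_neg ht.le, mul_left_comm, ← rpow_add ht]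
  ring_nf

theorem G_eq_rpow_mul_G_one (hs : 0 < s) (z : ℝ^d) :
    G d α β s z = s ^ (-(d : ℝ) / α) * G d α β 1 ((s ^ (1 / α))⁻¹ • z) := by
  rw [G, G, one_rpow, one_rpow, one_mul, div_one, norm_smul, norm_inv, norm_of_nonneg
    (rpow_nonneg hs.le _), inv_mul_eq_div]

theorem rpow_neg_div_mul_rpow_one_div_pow (hs : 0 < s) :
    s ^ (-(d : ℝ) / α) * (s ^ (1 / α)) ^ d = 1 := by
  rw [← rpow_natCast, ← rpow_mul hs.le, ← rpow_add hs, neg_div, one_div_mul_eq_div,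
    neg_add_cancel, rpow_zero]

theorem lintegral_G_eq_lintegral_G_one (hs : 0 < s) :
    ∫⁻ z, ENNReal.ofReal (G d α β s z) = ∫⁻ z, ENNReal.ofReal (G d α β 1 z) := by
  simp_rw [G_eq_rpow_mul_G_one hs, ENNReal.ofReal_mul (rpow_nonneg hs.le _)]
  rw [lintegral_const_mul' _ _ ENNReal.ofReal_ne_top,
    Measure.lintegral_comp_inv_smul_of_pos volume (fun z => ENNReal.ofReal (G d α β 1 z))
      (rpow_pos_of_pos hs _), finrank_euclideanSpace_fin, ← mul_assoc,
    ← ENNReal.ofReal_mul (rpow_nonneg hs.le _), rpow_neg_div_mul_rpow_one_div_pow hs,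
    ENNReal.ofReal_one, one_mul]

theorem lintegral_G_one_lt_top (hβ : (d : ℝ) < β) :
    ∫⁻ z : ℝ^d, ENNReal.ofReal (G d α β 1 z) < ⊤ := by
  have hβ0 : 0 ≤ β := (Nat.cast_nonneg d).trans hβ.le
  have hbound (z : ℝ^d) : G d α β 1 z ≤ 2 ^ β * (1 + ‖z‖) ^ (-β) := by
    have hz : 0 ≤ 1 + ‖z‖ := by positivity
    calc G d α β 1 z = max ‖z‖ 1 ^ (-β) := by rw [G, one_rpow, one_rpow, div_one, one_mul]
      _ ≤ ((1 + ‖z‖) / 2) ^ (-β) :=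
          rpow_le_rpow_of_nonpos (by positivity) (by grind) (neg_nonpos.2 hβ0)
      _ = 2 ^ β * (1 + ‖z‖) ^ (-β) := by
          rw [div_rpow hz zero_le_two, rpow_neg zero_le_two, div_inv_eq_mul, mul_comm]
  calc ∫⁻ z, ENNReal.ofReal (G d α β 1 z)
      ≤ ∫⁻ z : ℝ^d, ENNReal.ofReal (2 ^ β) * ENNReal.ofReal ((1 + ‖z‖) ^ (-β)) :=
        lintegral_mono fun z => (ENNReal.ofReal_le_ofReal (hbound z)).trans_eq
          (ENNReal.ofReal_mul (by positivity))
    _ < ⊤ := by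
        rw [lintegral_const_mul' _ _ ENNReal.ofReal_ne_top]
        refine ENNReal.mul_lt_top ENNReal.ofReal_lt_top (finite_integral_one_add_norm ?_)
        rwa [finrank_euclideanSpace_fin]

theorem G_le_two_rpow_mul_G_of_norm_le (hα : 0 < α) (hβ : 0 ≤ β) (ht : 0 < t) (htu : t ≤ 2 * u)
    {x : ℝ^d} (hx : ‖x‖ ≤ t ^ (1 / α)) (y : ℝ^d) :
    G d α β u y ≤ 2 ^ ((d : ℝ) / α) * G d α β t x := by
  have hexp : -(d : ℝ) / α ≤ 0 := div_nonpos_of_nonpos_of_nonneg (by simp) hα.le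
  calc G d α β u y ≤ u ^ (-(d : ℝ) / α) := G_le_rpow hβ (by linarith) y
    _ ≤ (t / 2) ^ (-(d : ℝ) / α) := rpow_le_rpow_of_nonpos (by positivity) (by linarith) hexp
    _ = 2 ^ ((d : ℝ) / α) * G d α β t x := by
        rw [G_eq_of_norm_le ht hx, div_rpow ht.le zero_le_two, neg_div, rpow_neg zero_le_two,
          div_inv_eq_mul, mul_comm]

theorem G_le_two_rpow_mul_G_of_le_norm (hα : 0 < α) (hdβ : (d : ℝ) ≤ β) (hu : 0 < u)
    (hut : u ≤ t) {x y : ℝ^d} (hx : t ^ (1 / α) ≤ ‖x‖)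
    (hxy : ‖x‖ ≤ 2 * ‖y‖) : G d α β u y ≤ 2 ^ β * G d α β t x := by
  have ht : 0 < t := hu.trans_le hut
  have hβ : 0 ≤ β := (Nat.cast_nonneg d).trans hdβ
  have hx0 : 0 < ‖x‖ := (rpow_pos_of_pos ht _).trans_le hx
  rw [G_eq_rpow_mul_max_rpow hu, G_eq_rpow_mul_max_rpow ht, max_eq_left hx]
  calc u ^ ((β - d) / α) * max ‖y‖ (u ^ (1 / α)) ^ (-β)
      ≤ t ^ ((β - d) / α) * (‖x‖ / 2) ^ (-β) := by
        gcongr ?_ * ?_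
        · exact rpow_le_rpow hu.le hut (div_nonneg (by linarith) hα.le)
        · exact rpow_le_rpow_of_nonpos (by positivity)
            (by linarith [le_max_left ‖y‖ (u ^ (1 / α))]) (neg_nonpos.2 hβ)
    _ = 2 ^ β * (t ^ ((β - d) / α) * ‖x‖ ^ (-β)) := by
        rw [div_rpow hx0.le zero_le_two, rpow_neg zero_le_two, div_inv_eq_mul]
        ring

theorem min_G_le (hα : 0 < α) (hdβ : (d : ℝ) ≤ β) (hu : 0 < u) (hv : 0 < v) (hvu : v ≤ u)
    (x z : ℝ^d) :
    min (G d α β u (x - z)) (G d α β v z) ≤ (2 ^ ((d : ℝ) / α) + 2 ^ β) * G d α β (u + v) x := by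
  have hβ : 0 ≤ β := (Nat.cast_nonneg d).trans hdβ
  have hG : 0 ≤ G d α β (u + v) x := G_nonneg (by positivity) x
  have h2d : 0 ≤ 2 ^ ((d : ℝ) / α) * G d α β (u + v) x := by positivity
  have h2β : 0 ≤ 2 ^ β * G d α β (u + v) x := by positivity
  rw [add_mul]
  rcases le_total ‖x‖ ((u + v) ^ (1 / α)) with hx | hx
  · refine (min_le_left _ _).trans ?_
    linarith [G_le_two_rpow_mul_G_of_norm_le (u := u) hα hβ (add_pos hu hv) (by linarith) hx
      (x - z)]
  rcases le_total ‖x‖ (2 * ‖x - z‖) with hxz | hxz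
  · refine (min_le_left _ _).trans ?_
    linarith [G_le_two_rpow_mul_G_of_le_norm hα hdβ hu (by linarith) hx hxz]
  · refine (min_le_right _ _).trans ?_
    linarith [G_le_two_rpow_mul_G_of_le_norm hα hdβ hv (by linarith) hx (y := z)
      (by linarith [norm_le_norm_sub_add x z])]

theorem G_le_two_rpow_mul_G_of_norm_le_add (hα : 0 < α) (hdβ : (d : ℝ) ≤ β) (ht : 0 < t)
    (htu : t ≤ 2 * u) (hut : u ≤ t) {x y : ℝ^d}
    (hy : ‖y‖ ≤ ‖x‖ + t ^ (1 / α)) :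
    G d α β t x ≤ 2 ^ ((β - d) / α + β) * G d α β u y := by
  have hu : 0 < u := by linarith
  have hβ : 0 ≤ β := (Nat.cast_nonneg d).trans hdβ
  have hMy0 : 0 ≤ max ‖y‖ (u ^ (1 / α)) := (rpow_pos_of_pos hu _).le.trans (le_max_right _ _)
  have hMy : max ‖y‖ (u ^ (1 / α)) ≤ 2 * max ‖x‖ (t ^ (1 / α)) := by
    have := rpow_le_rpow hu.le hut (one_div_nonneg.2 hα.le)
    grind
  rw [G_eq_rpow_mul_max_rpow ht, G_eq_rpow_mul_max_rpow hu]
  calc t ^ ((β - d) / α) * max ‖x‖ (t ^ (1 / α)) ^ (-β)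
      ≤ (2 * u) ^ ((β - d) / α) * (max ‖y‖ (u ^ (1 / α)) / 2) ^ (-β) := by
        gcongr ?_ * ?_
        · exact rpow_le_rpow ht.le htu (div_nonneg (by linarith) hα.le)
        · exact rpow_le_rpow_of_nonpos (by positivity) (by linarith) (neg_nonpos.2 hβ)
    _ = 2 ^ ((β - d) / α + β) * (u ^ ((β - d) / α) * max ‖y‖ (u ^ (1 / α)) ^ (-β)) := by
        rw [mul_rpow zero_le_two hu.le, div_rpow hMy0 zero_le_two, rpow_neg zero_le_two,
          div_inv_eq_mul, rpow_add two_pos]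
        ring

noncomputable def GConv (d : ℕ) (α β u v : ℝ) (x : ℝ^d) : ℝ≥0∞ :=
  ∫⁻ z, ENNReal.ofReal (G d α β u (x - z) * G d α β v z)

theorem GConv_comm (d : ℕ) (α β u v : ℝ) (x : ℝ^d) :
    GConv d α β u v x = GConv d α β v u x := by
  rw [GConv, ← lintegral_sub_left_eq_self _ x]
  simp only [sub_sub_cancel, mul_comm, GConv]

theorem GConv_le (hα : 0 < α) (hβ : (d : ℝ) < β) (hu : 0 < u) (hv : 0 < v) (hvu : v ≤ u)
    (x : ℝ^d) :
    GConv d α β u v x ≤ ENNReal.ofReal (2 * (2 ^ ((d : ℝ) / α) + 2 ^ β) *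
      (∫⁻ z, ENNReal.ofReal (G d α β 1 z)).toReal * G d α β (u + v) x) := by
  set I := ∫⁻ z, ENNReal.ofReal (G d α β 1 z)
  set K := (2 ^ ((d : ℝ) / α) + 2 ^ β) * G d α β (u + v) x with hKdef
  have hK : 0 ≤ K := by have := G_nonneg (α := α) (β := β) (add_pos hu hv).le x; positivity
  have hpoint (z : ℝ^d) :
      ENNReal.ofReal (G d α β u (x - z) * G d α β v z) ≤
        ENNReal.ofReal K * (ENNReal.ofReal (G d α β u (x - z)) + ENNReal.ofReal (G d α β v z)) := by
    have ha := G_nonneg (α := α) (β := β) hu.le (x - z)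
    have hb := G_nonneg (α := α) (β := β) hv.le z
    rw [← ENNReal.ofReal_add ha hb, ← ENNReal.ofReal_mul hK, ← min_mul_max]
    refine ENNReal.ofReal_le_ofReal (mul_le_mul (min_G_le hα hβ.le hu hv hvu x z) ?_
      (by positivity) hK)
    exact max_le (le_add_of_nonneg_right hb) (le_add_of_nonneg_left ha)
  have hshift : ∫⁻ z, ENNReal.ofReal (G d α β u (x - z)) = I := by
    rw [lintegral_sub_left_eq_self (fun z => ENNReal.ofReal (G d α β u z)) x,
      lintegral_G_eq_lintegral_G_one hu]
  calc GConv d α β u v x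
      ≤ ∫⁻ z, ENNReal.ofReal K *
          (ENNReal.ofReal (G d α β u (x - z)) + ENNReal.ofReal (G d α β v z)) :=
        lintegral_mono hpoint
    _ = ENNReal.ofReal K * (I + I) := by
        rw [lintegral_const_mul' _ _ ENNReal.ofReal_ne_top,
          lintegral_add_left (Measurable.ennreal_ofReal (f := fun z => G d α β u (x - z))
            ((continuous_G d α β u).comp (continuous_sub_left x)).measurable),
          hshift, lintegral_G_eq_lintegral_G_one hv]
    _ = ENNReal.ofReal (2 * (2 ^ ((d : ℝ) / α) + 2 ^ β) * I.toReal * G d α β (u + v) x) := by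
        have hI : I = ENNReal.ofReal I.toReal :=
          (ENNReal.ofReal_toReal (lintegral_G_one_lt_top hβ).ne).symm
        rw [hI, ← ENNReal.ofReal_add ENNReal.toReal_nonneg ENNReal.toReal_nonneg,
          ← ENNReal.ofReal_mul hK,
          ENNReal.toReal_ofReal ENNReal.toReal_nonneg, hKdef]
        ring_nf

theorem le_GConv (hα : 0 < α) (hdβ : (d : ℝ) ≤ β) (hu : 0 < u) (hv : 0 < v) (hvu : v ≤ u)
    (x : ℝ^d) :
    ENNReal.ofReal ((2 ^ ((β - d) / α + β))⁻¹ * volume.real (closedBall (0 : ℝ^d) 1) *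
      G d α β (u + v) x) ≤ GConv d α β u v x := by
  set c := (2 ^ ((β - d) / α + β))⁻¹ * G d α β (u + v) x * v ^ (-(d : ℝ) / α) with hc
  have hc0 : 0 ≤ c := by
    have := G_nonneg (α := α) (β := β) (add_pos hu hv).le x
    have := rpow_nonneg hv.le (-(d : ℝ) / α)
    positivity
  have hr : 0 < v ^ (1 / α) := rpow_pos_of_pos hv _
  have hvuv : v ^ (1 / α) ≤ (u + v) ^ (1 / α) :=
    rpow_le_rpow hv.le (by linarith) (one_div_nonneg.2 hα.le)
  have hball : ∀ z ∈ closedBall (0 : ℝ^d) (v ^ (1 / α)),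
      ENNReal.ofReal c ≤ ENNReal.ofReal (G d α β u (x - z) * G d α β v z) := by
    intro z hz
    rw [mem_closedBall_zero_iff] at hz
    refine ENNReal.ofReal_le_ofReal ?_
    rw [hc, G_eq_of_norm_le hv hz]
    refine mul_le_mul_of_nonneg_right ((inv_mul_le_iff₀ (by positivity)).2
      (G_le_two_rpow_mul_G_of_norm_le_add hα hdβ (add_pos hu hv) (by linarith) (by linarith) ?_))
      (rpow_nonneg hv.le _)
    linarith [norm_sub_le x z]
  have hvol : volume (closedBall (0 : ℝ^d) (v ^ (1 / α))) =
      ENNReal.ofReal ((v ^ (1 / α)) ^ d * volume.real (closedBall (0 : ℝ^d) 1)) := by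
    rw [Measure.addHaar_closedBall' _ _ hr.le, finrank_euclideanSpace_fin,
      ENNReal.ofReal_mul (by positivity), ofReal_measureReal measure_closedBall_lt_top.ne]
  calc ENNReal.ofReal ((2 ^ ((β - d) / α + β))⁻¹ *
        volume.real (closedBall (0 : ℝ^d) 1) * G d α β (u + v) x)
      = ENNReal.ofReal c * volume (closedBall (0 : ℝ^d) (v ^ (1 / α))) := by
        rw [hvol, ← ENNReal.ofReal_mul hc0, hc]
        congr 1
        linear_combination (-(2 ^ ((β - d) / α + β))⁻¹ *
          volume.real (closedBall (0 : ℝ^d) 1) * G d α β (u + v) x) *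
          rpow_neg_div_mul_rpow_one_div_pow (d := d) (α := α) hv
    _ = ∫⁻ _ in closedBall 0 (v ^ (1 / α)), ENNReal.ofReal c := (setLIntegral_const _ _).symm
    _ ≤ ∫⁻ z in closedBall 0 (v ^ (1 / α)), ENNReal.ofReal (G d α β u (x - z) * G d α β v z) :=
        setLIntegral_mono' measurableSet_closedBall hball
    _ ≤ GConv d α β u v x := setLIntegral_le_lintegral _ _

theorem GConv_comparable (hα : 0 < α) (hβ : (d : ℝ) < β) (hu : 0 < u) (hv : 0 < v)
    (x : ℝ^d) :
    ENNReal.ofReal ((2 ^ ((β - d) / α + β))⁻¹ * volume.real (closedBall (0 : ℝ^d) 1) *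
      G d α β (u + v) x) ≤ GConv d α β u v x ∧
    GConv d α β u v x ≤ ENNReal.ofReal (2 * (2 ^ ((d : ℝ) / α) + 2 ^ β) *
      (∫⁻ z, ENNReal.ofReal (G d α β 1 z)).toReal * G d α β (u + v) x) := by
  rcases le_total v u with hvu | huv
  · exact ⟨le_GConv hα hβ.le hu hv hvu x, GConv_le hα hβ hu hv hvu x⟩
  · rw [GConv_comm, add_comm u v]
    exact ⟨le_GConv hα hβ.le hv hu huv x, GConv_le hα hβ hv hu huv x⟩

end G

theorem G_convolution_comparable_general (d : ℕ) (α β : ℝ)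
    (hα0 : 0 < α) (hβ1 : (d : ℝ) < β) :
    ∃ c : ℝ, 1 ≤ c ∧ ∀ (x : EuclideanSpace ℝ (Fin d)) (s t : ℝ), 0 < s → s < t →
      ENNReal.ofReal (c⁻¹ * G d α β t x) ≤
        (∫⁻ z, ENNReal.ofReal (G d α β (t - s) (x - z) * G d α β s z)) ∧
      (∫⁻ z, ENNReal.ofReal (G d α β (t - s) (x - z) * G d α β s z)) ≤
        ENNReal.ofReal (c * G d α β t x) := by
  set cL := (2 ^ ((β - d) / α + β))⁻¹ * volume.real (closedBall (0 : ℝ^d) 1)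
  set cU := 2 * (2 ^ ((d : ℝ) / α) + 2 ^ β) * (∫⁻ z, ENNReal.ofReal (G d α β 1 z)).toReal
  have hcL : 0 < cL := by
    have : 0 < volume.real (closedBall (0 : ℝ^d) 1) :=
      ENNReal.toReal_pos (measure_closedBall_pos _ _ one_pos).ne' measure_closedBall_lt_top.ne
    positivity
  refine ⟨max 1 (max cU cL⁻¹), le_max_left _ _, fun x s t hs hst => ?_⟩
  obtain ⟨hlower, hupper⟩ := GConv_comparable hα0 hβ1 (sub_pos.2 hst) hs x
  rw [sub_add_cancel] at hlower hupper
  have hG := G_nonneg (α := α) (β := β) (hs.trans hst).le x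
  refine ⟨(ENNReal.ofReal_le_ofReal (mul_le_mul_of_nonneg_right ?_ hG)).trans hlower,
    hupper.trans (ENNReal.ofReal_le_ofReal (mul_le_mul_of_nonneg_right ?_ hG))⟩
  · exact inv_le_of_inv_le₀ hcL ((le_max_right _ _).trans (le_max_right _ _))
  · exact (le_max_left _ _).trans (le_max_right _ _)

theorem G_convolution_comparable (d : ℕ) (hd : 1 ≤ d) (α β : ℝ)
    (hα0 : 0 < α) (hα2 : α < 2) (hβ1 : (d : ℝ) < β) (hβ2 : β < (d : ℝ) + 2) :
    ∃ c : ℝ, 1 ≤ c ∧ ∀ (x : EuclideanSpace ℝ (Fin d)) (s t : ℝ), 0 < s → s < t →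
      ENNReal.ofReal (c⁻¹ * G d α β t x) ≤
        (∫⁻ z, ENNReal.ofReal (G d α β (t - s) (x - z) * G d α β s z)) ∧
      (∫⁻ z, ENNReal.ofReal (G d α β (t - s) (x - z) * G d α β s z)) ≤
        ENNReal.ofReal (c * G d α β t x) :=
  G_convolution_comparable_general d α β hα0 hβ1
end

section
/- Let α ∈ (0,2), κ ∈ (d-α, d], ζ > 0 with α + κ - d > ζ. Define H_t^{(κ,ζ)}(x) = min(t^{-ζ/α}, max(|x|/t^{1/α},1)^ζ) · G_t^{(α+κ)}(x), where G_t^{(β)}(x) = t^{-d/α} max(|x|/t^{1/α},1)^{-β}. Then there exist constants C_H, C > 0 such that (i) ∫_{ℝ^d} H_{t-s}^{(κ,ζ)}(x-z) H_s^{(κ,ζ)}(z) dz ≤ C_H H_t^{(κ,ζ)}(x) for all 0 < s < t and x ∈ ℝ^d, and (ii) ∫_{ℝ^d} H_t^{(κ,ζ)}(x) dx ≤ C for all t > 0. -/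
open MeasureTheory Module

noncomputable def H (d : ℕ) (α κ ζ t : ℝ) (x : EuclideanSpace ℝ (Fin d)) : ℝ :=
  min (t ^ (-ζ / α)) ((max (‖x‖ / t ^ (1 / α)) 1) ^ ζ) * G d α (α + κ) t x

namespace HP
variable {d : ℕ} {α κ ζ s t : ℝ}

noncomputable def M (d : ℕ) (α t : ℝ) (x : EuclideanSpace ℝ (Fin d)) : ℝ :=
  max (‖x‖ / t ^ (1/α)) 1

lemma M_pos (t : ℝ) (x : EuclideanSpace ℝ (Fin d)) : 0 < M d α t x :=
  lt_of_lt_of_le one_pos (le_max_right _ _)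

lemma M_ge_one (t : ℝ) (x : EuclideanSpace ℝ (Fin d)) : 1 ≤ M d α t x := le_max_right _ _

lemma div_le_M (t : ℝ) (x : EuclideanSpace ℝ (Fin d)) : ‖x‖ / t ^ (1/α) ≤ M d α t x :=
  le_max_left _ _

lemma H_eq (ht : 0 < t) (x : EuclideanSpace ℝ (Fin d)) :
    H d α κ ζ t x = min (t ^ (-(((d:ℝ)+ζ)/α)) * M d α t x ^ (-(α+κ)))
      (t ^ (-((d:ℝ)/α)) * M d α t x ^ (-(α+κ-ζ))) := by
  have hM : (0:ℝ) < max (‖x‖ / t ^ (1/α)) 1 := lt_of_lt_of_le one_pos (le_max_right _ _)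
  unfold H G M
  rw [min_mul_of_nonneg _ _ (by positivity)]
  congr 1
  · rw [← mul_assoc, ← Real.rpow_add ht, show -ζ/α + -(d:ℝ)/α = -(((d:ℝ)+ζ)/α) by ring]
  · rw [mul_left_comm, ← Real.rpow_add hM, show ζ + -(α+κ) = -(α+κ-ζ) by ring,
      show -(d:ℝ)/α = -((d:ℝ)/α) by ring]

lemma H_nonneg (ht : 0 < t) (x : EuclideanSpace ℝ (Fin d)) : 0 ≤ H d α κ ζ t x := by
  have hM : (0:ℝ) < max (‖x‖ / t ^ (1/α)) 1 := lt_of_lt_of_le one_pos (le_max_right _ _)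
  unfold H G
  have h1 : (0:ℝ) ≤ t ^ (-ζ/α) := Real.rpow_nonneg ht.le _
  positivity

lemma measurable_H (t : ℝ) : Measurable (H d α κ ζ t) := by
  unfold H G; fun_prop

lemma rpow_neg_le {e a b : ℝ} (he : 0 ≤ e) (ha : 0 < a) (h : a ≤ 2 * b) :
    b ^ (-e) ≤ 2 ^ e * a ^ (-e) := by
  have hb : 0 < b := by linarith
  have h1 : b ^ (-e) ≤ (a/2) ^ (-e) :=
    Real.rpow_le_rpow_of_nonpos (by linarith) (by linarith) (neg_nonpos.mpr he)
  have h2 : (a/2:ℝ) ^ (-e) = 2 ^ e * a ^ (-e) := by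
    rw [Real.div_rpow ha.le (by norm_num), Real.rpow_neg (by norm_num : (0:ℝ) ≤ 2),
      div_inv_eq_mul, mul_comm]
  linarith

lemma rpow_scale {α u X : ℝ} (hu : 0 < u) (hX : 0 < X) (e c : ℝ) :
    u ^ e * (X / u ^ (1/α)) ^ (-c) = u ^ (e + c/α) * X ^ (-c) := by
  have h1 : (X / u ^ (1/α)) ^ (-c) = u ^ (c/α) * X ^ (-c) := by
    rw [Real.div_rpow hX.le (Real.rpow_nonneg hu.le _), ← Real.rpow_mul hu.le,
      show (1/α) * (-c) = -(c/α) by ring, Real.rpow_neg hu.le, div_inv_eq_mul, mul_comm]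
  rw [h1, ← mul_assoc, ← Real.rpow_add hu]

-- Lemma A
lemma lemA (hα : 0 < α) (hζ : 0 < ζ) (hκ1 : (d:ℝ) - α < κ) (hmain : ζ < α + κ - (d:ℝ))
    (hs : 0 < s) (hst : s ≤ t) (hts : t ≤ 2*s)
    {w x : EuclideanSpace ℝ (Fin d)} (hm : M d α t x ≤ 2 * M d α s w) :
    H d α κ ζ s w ≤ (2 ^ (((d:ℝ)+ζ)/α) * 2 ^ (α+κ)) * H d α κ ζ t x := by
  have ht : 0 < t := hs.trans_le hst
  have hβ : (0:ℝ) ≤ α + κ := by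
    have : (0:ℝ) ≤ (d:ℝ) := Nat.cast_nonneg d
    linarith
  have hE1 : (0:ℝ) ≤ ((d:ℝ)+ζ)/α := by positivity
  have hE2 : (0:ℝ) ≤ (d:ℝ)/α := by positivity
  have hMt := M_pos (α := α) t x
  have hMs := M_pos (α := α) s w
  set C := (2:ℝ) ^ (((d:ℝ)+ζ)/α) * 2 ^ (α+κ) with hC
  have hCpos : 0 < C := by positivity
  rw [H_eq hs, H_eq ht, mul_min_of_nonneg _ _ hCpos.le]
  apply le_min
  · refine (min_le_left _ _).trans ?_
    have h1 : s ^ (-(((d:ℝ)+ζ)/α)) ≤ 2 ^ (((d:ℝ)+ζ)/α) * t ^ (-(((d:ℝ)+ζ)/α)) :=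
      rpow_neg_le hE1 ht hts
    have h2 : M d α s w ^ (-(α+κ)) ≤ 2 ^ (α+κ) * M d α t x ^ (-(α+κ)) :=
      rpow_neg_le hβ hMt hm
    calc s ^ (-(((d:ℝ)+ζ)/α)) * M d α s w ^ (-(α+κ))
        ≤ (2 ^ (((d:ℝ)+ζ)/α) * t ^ (-(((d:ℝ)+ζ)/α))) * (2 ^ (α+κ) * M d α t x ^ (-(α+κ))) := by
          apply mul_le_mul h1 h2 (Real.rpow_nonneg hMs.le _) (by positivity)
      _ = C * (t ^ (-(((d:ℝ)+ζ)/α)) * M d α t x ^ (-(α+κ))) := by rw [hC]; ring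
  · refine (min_le_right _ _).trans ?_
    have hγ : (0:ℝ) ≤ α + κ - ζ := by
      have : (0:ℝ) ≤ (d:ℝ) := Nat.cast_nonneg d
      linarith
    have h1 : s ^ (-((d:ℝ)/α)) ≤ 2 ^ ((d:ℝ)/α) * t ^ (-((d:ℝ)/α)) := rpow_neg_le hE2 ht hts
    have h2 : M d α s w ^ (-(α+κ-ζ)) ≤ 2 ^ (α+κ-ζ) * M d α t x ^ (-(α+κ-ζ)) :=
      rpow_neg_le hγ hMt hm
    have h3 : (2:ℝ) ^ ((d:ℝ)/α) ≤ 2 ^ (((d:ℝ)+ζ)/α) :=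
      Real.rpow_le_rpow_of_exponent_le one_le_two (by gcongr; linarith)
    have h4 : (2:ℝ) ^ (α+κ-ζ) ≤ 2 ^ (α+κ) :=
      Real.rpow_le_rpow_of_exponent_le one_le_two (by linarith)
    calc s ^ (-((d:ℝ)/α)) * M d α s w ^ (-(α+κ-ζ))
        ≤ (2 ^ ((d:ℝ)/α) * t ^ (-((d:ℝ)/α))) * (2 ^ (α+κ-ζ) * M d α t x ^ (-(α+κ-ζ))) := by
          apply mul_le_mul h1 h2 (Real.rpow_nonneg hMs.le _) (by positivity)
      _ ≤ (2 ^ (((d:ℝ)+ζ)/α) * t ^ (-((d:ℝ)/α))) * (2 ^ (α+κ) * M d α t x ^ (-(α+κ-ζ))) := by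
          have := Real.rpow_nonneg ht.le (-((d:ℝ)/α))
          have := Real.rpow_nonneg hMt.le (-(α+κ-ζ))
          apply mul_le_mul (by nlinarith) (by nlinarith) (by positivity) (by positivity)
      _ = C * (t ^ (-((d:ℝ)/α)) * M d α t x ^ (-(α+κ-ζ))) := by rw [hC]; ring

-- Lemma B
lemma lemB (hα : 0 < α) (hζ : 0 < ζ) (hmain : ζ < α + κ - (d:ℝ))
    (hs : 0 < s) (hst : s ≤ t)
    {w x : EuclideanSpace ℝ (Fin d)}
    (hx : t ^ (1/α) ≤ ‖x‖) (hw : ‖x‖ ≤ 2 * (s ^ (1/α) * M d α s w)) :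
    H d α κ ζ s w ≤ 2 ^ (α+κ) * H d α κ ζ t x := by
  have ht : 0 < t := hs.trans_le hst
  have hd0 : (0:ℝ) ≤ (d:ℝ) := Nat.cast_nonneg d
  have hu : (0:ℝ) < t ^ (1/α) := Real.rpow_pos_of_pos ht _
  have hus : (0:ℝ) < s ^ (1/α) := Real.rpow_pos_of_pos hs _
  have hX : (0:ℝ) < ‖x‖ := lt_of_lt_of_le hu hx
  have hMs := M_pos (α := α) s w
  have hMt : M d α t x = ‖x‖ / t ^ (1/α) := max_eq_left ((one_le_div hu).mpr hx)
  have hdiv : ‖x‖ / s ^ (1/α) ≤ 2 * M d α s w := by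
    rw [div_le_iff₀ hus]
    calc ‖x‖ ≤ 2 * (s ^ (1/α) * M d α s w) := hw
      _ = 2 * M d α s w * s ^ (1/α) := by ring
  have hXdiv : (0:ℝ) < ‖x‖ / s ^ (1/α) := by positivity
  have hexp : (0:ℝ) < α + κ - ζ - (d:ℝ) := by linarith
  have hC : (0:ℝ) < (2:ℝ) ^ (α+κ) := by positivity
  rw [H_eq hs, H_eq ht, mul_min_of_nonneg _ _ hC.le]
  apply le_min
  · refine (min_le_left _ _).trans ?_
    have h2 : M d α s w ^ (-(α+κ)) ≤ 2 ^ (α+κ) * (‖x‖ / s ^ (1/α)) ^ (-(α+κ)) :=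
      rpow_neg_le (by linarith) hXdiv hdiv
    have h3 : s ^ (-(((d:ℝ)+ζ)/α)) * (‖x‖ / s ^ (1/α)) ^ (-(α+κ))
        = s ^ (-(((d:ℝ)+ζ)/α) + (α+κ)/α) * ‖x‖ ^ (-(α+κ)) := rpow_scale hs hX _ _
    have h4 : t ^ (-(((d:ℝ)+ζ)/α)) * (‖x‖ / t ^ (1/α)) ^ (-(α+κ))
        = t ^ (-(((d:ℝ)+ζ)/α) + (α+κ)/α) * ‖x‖ ^ (-(α+κ)) := rpow_scale ht hX _ _
    have h5 : s ^ (-(((d:ℝ)+ζ)/α) + (α+κ)/α) ≤ t ^ (-(((d:ℝ)+ζ)/α) + (α+κ)/α) := by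
      apply Real.rpow_le_rpow hs.le hst
      rw [show -(((d:ℝ)+ζ)/α) + (α+κ)/α = (α+κ-ζ-(d:ℝ))/α by ring]
      positivity
    have hXn : (0:ℝ) ≤ ‖x‖ ^ (-(α+κ)) := Real.rpow_nonneg hX.le _
    calc s ^ (-(((d:ℝ)+ζ)/α)) * M d α s w ^ (-(α+κ))
        ≤ s ^ (-(((d:ℝ)+ζ)/α)) * (2 ^ (α+κ) * (‖x‖ / s ^ (1/α)) ^ (-(α+κ))) := by
          apply mul_le_mul_of_nonneg_left h2 (Real.rpow_nonneg hs.le _)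
      _ = 2 ^ (α+κ) * (s ^ (-(((d:ℝ)+ζ)/α) + (α+κ)/α) * ‖x‖ ^ (-(α+κ))) := by
          rw [← h3]; ring
      _ ≤ 2 ^ (α+κ) * (t ^ (-(((d:ℝ)+ζ)/α) + (α+κ)/α) * ‖x‖ ^ (-(α+κ))) := by
          apply mul_le_mul_of_nonneg_left (mul_le_mul_of_nonneg_right h5 hXn) hC.le
      _ = 2 ^ (α+κ) * (t ^ (-(((d:ℝ)+ζ)/α)) * M d α t x ^ (-(α+κ))) := by
          rw [hMt, h4]
  · refine (min_le_right _ _).trans ?_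
    have hγ : (0:ℝ) ≤ α + κ - ζ := by linarith
    have h2 : M d α s w ^ (-(α+κ-ζ)) ≤ 2 ^ (α+κ-ζ) * (‖x‖ / s ^ (1/α)) ^ (-(α+κ-ζ)) :=
      rpow_neg_le hγ hXdiv hdiv
    have h3 : s ^ (-((d:ℝ)/α)) * (‖x‖ / s ^ (1/α)) ^ (-(α+κ-ζ))
        = s ^ (-((d:ℝ)/α) + (α+κ-ζ)/α) * ‖x‖ ^ (-(α+κ-ζ)) := rpow_scale hs hX _ _
    have h4 : t ^ (-((d:ℝ)/α)) * (‖x‖ / t ^ (1/α)) ^ (-(α+κ-ζ))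
        = t ^ (-((d:ℝ)/α) + (α+κ-ζ)/α) * ‖x‖ ^ (-(α+κ-ζ)) := rpow_scale ht hX _ _
    have h5 : s ^ (-((d:ℝ)/α) + (α+κ-ζ)/α) ≤ t ^ (-((d:ℝ)/α) + (α+κ-ζ)/α) := by
      apply Real.rpow_le_rpow hs.le hst
      rw [show -((d:ℝ)/α) + (α+κ-ζ)/α = (α+κ-ζ-(d:ℝ))/α by ring]
      positivity
    have hXn : (0:ℝ) ≤ ‖x‖ ^ (-(α+κ-ζ)) := Real.rpow_nonneg hX.le _
    have h6 : (2:ℝ) ^ (α+κ-ζ) ≤ 2 ^ (α+κ) :=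
      Real.rpow_le_rpow_of_exponent_le one_le_two (by linarith)
    calc s ^ (-((d:ℝ)/α)) * M d α s w ^ (-(α+κ-ζ))
        ≤ s ^ (-((d:ℝ)/α)) * (2 ^ (α+κ-ζ) * (‖x‖ / s ^ (1/α)) ^ (-(α+κ-ζ))) := by
          apply mul_le_mul_of_nonneg_left h2 (Real.rpow_nonneg hs.le _)
      _ = 2 ^ (α+κ-ζ) * (s ^ (-((d:ℝ)/α) + (α+κ-ζ)/α) * ‖x‖ ^ (-(α+κ-ζ))) := by
          rw [← h3]; ring
      _ ≤ 2 ^ (α+κ) * (t ^ (-((d:ℝ)/α) + (α+κ-ζ)/α) * ‖x‖ ^ (-(α+κ-ζ))) := by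
          have hs5 : (0:ℝ) ≤ s ^ (-((d:ℝ)/α) + (α+κ-ζ)/α) := Real.rpow_nonneg hs.le _
          have ht5 : (0:ℝ) ≤ t ^ (-((d:ℝ)/α) + (α+κ-ζ)/α) := Real.rpow_nonneg ht.le _
          apply mul_le_mul h6 (mul_le_mul_of_nonneg_right h5 hXn) (by positivity) hC.le
      _ = 2 ^ (α+κ) * (t ^ (-((d:ℝ)/α)) * M d α t x ^ (-(α+κ-ζ))) := by
          rw [hMt, h4]


lemma H_le_bound (hα : 0 < α) (hζ : 0 < ζ) (hmain : ζ < α + κ - (d:ℝ)) (ht : 0 < t)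
    (x : EuclideanSpace ℝ (Fin d)) :
    H d α κ ζ t x ≤ (t ^ (-((d:ℝ)/α)) * 2 ^ (α+κ-ζ)) * (1 + ‖(t ^ (1/α))⁻¹ • x‖) ^ (-(α+κ-ζ)) := by
  have hd0 : (0:ℝ) ≤ (d:ℝ) := Nat.cast_nonneg d
  have hγ : (0:ℝ) ≤ α + κ - ζ := by linarith
  have hu : (0:ℝ) < t ^ (1/α) := Real.rpow_pos_of_pos ht _
  have hnorm : ‖(t ^ (1/α))⁻¹ • x‖ = ‖x‖ / t ^ (1/α) := by
    rw [norm_smul, Real.norm_eq_abs, abs_inv, abs_of_pos hu, inv_mul_eq_div]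
  have h1 : 1 + ‖x‖ / t ^ (1/α) ≤ 2 * M d α t x := by
    have := div_le_M (α := α) t x
    have := M_ge_one (α := α) t x
    linarith
  have h2 : M d α t x ^ (-(α+κ-ζ)) ≤ 2 ^ (α+κ-ζ) * (1 + ‖x‖ / t ^ (1/α)) ^ (-(α+κ-ζ)) :=
    rpow_neg_le hγ (by positivity) h1
  calc H d α κ ζ t x ≤ t ^ (-((d:ℝ)/α)) * M d α t x ^ (-(α+κ-ζ)) := by
        rw [H_eq ht]; exact min_le_right _ _
    _ ≤ t ^ (-((d:ℝ)/α)) * (2 ^ (α+κ-ζ) * (1 + ‖x‖ / t ^ (1/α)) ^ (-(α+κ-ζ))) :=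
        mul_le_mul_of_nonneg_left h2 (Real.rpow_nonneg ht.le _)
    _ = (t ^ (-((d:ℝ)/α)) * 2 ^ (α+κ-ζ)) * (1 + ‖(t ^ (1/α))⁻¹ • x‖) ^ (-(α+κ-ζ)) := by
        rw [hnorm]; ring

lemma H_int (hα : 0 < α) (hζ : 0 < ζ) (hmain : ζ < α + κ - (d:ℝ)) (ht : 0 < t) :
    (∫⁻ x, ENNReal.ofReal (H d α κ ζ t x)) ≤
      ENNReal.ofReal (2 ^ (α+κ-ζ) * ∫ y : EuclideanSpace ℝ (Fin d), (1 + ‖y‖) ^ (-(α+κ-ζ))) := by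
  have hd0 : (0:ℝ) ≤ (d:ℝ) := Nat.cast_nonneg d
  have hγd : ((finrank ℝ (EuclideanSpace ℝ (Fin d)) : ℝ)) < α + κ - ζ := by
    rw [finrank_euclideanSpace_fin]; linarith
  have hI : Integrable (fun y : EuclideanSpace ℝ (Fin d) => (1 + ‖y‖) ^ (-(α+κ-ζ))) :=
    integrable_one_add_norm hγd
  have hu : (0:ℝ) < t ^ (1/α) := Real.rpow_pos_of_pos ht _
  set c : ℝ := t ^ (-((d:ℝ)/α)) * 2 ^ (α+κ-ζ) with hc
  have hc0 : 0 ≤ c := by positivity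
  have hint : Integrable (fun x : EuclideanSpace ℝ (Fin d) =>
      c * (1 + ‖(t ^ (1/α))⁻¹ • x‖) ^ (-(α+κ-ζ))) :=
    (hI.comp_smul (inv_ne_zero hu.ne')).const_mul c
  have hnn : (0 : EuclideanSpace ℝ (Fin d) → ℝ) ≤ᵐ[volume] fun x : EuclideanSpace ℝ (Fin d) =>
      c * (1 + ‖(t ^ (1/α))⁻¹ • x‖) ^ (-(α+κ-ζ)) := by
    filter_upwards with x
    simp only [Pi.zero_apply]
    positivity
  calc (∫⁻ x, ENNReal.ofReal (H d α κ ζ t x))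
      ≤ ∫⁻ x, ENNReal.ofReal (c * (1 + ‖(t ^ (1/α))⁻¹ • x‖) ^ (-(α+κ-ζ))) :=
        lintegral_mono fun x => ENNReal.ofReal_le_ofReal (H_le_bound hα hζ hmain ht x)
    _ = ENNReal.ofReal (∫ x : EuclideanSpace ℝ (Fin d),
          c * (1 + ‖(t ^ (1/α))⁻¹ • x‖) ^ (-(α+κ-ζ))) :=
        (ofReal_integral_eq_lintegral_ofReal hint hnn).symm
    _ = ENNReal.ofReal (2 ^ (α+κ-ζ) * ∫ y : EuclideanSpace ℝ (Fin d), (1 + ‖y‖) ^ (-(α+κ-ζ))) := by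
        congr 1
        rw [integral_const_mul]
        rw [Measure.integral_comp_smul_of_nonneg
          (μ := (volume : Measure (EuclideanSpace ℝ (Fin d))))
          (fun y => (1 + ‖y‖) ^ (-(α+κ-ζ))) ((t ^ (1/α))⁻¹) (hR := inv_nonneg.mpr hu.le)]
        rw [smul_eq_mul, finrank_euclideanSpace_fin]
        have hpow : ((t ^ (1/α))⁻¹ ^ d)⁻¹ = t ^ ((d:ℝ)/α) := by
          rw [← Real.rpow_neg ht.le (1/α), ← Real.rpow_natCast (t ^ (-(1/α))) d,
            ← Real.rpow_mul ht.le, ← Real.rpow_neg ht.le,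
            show -(-(1/α)*(d:ℕ)) = ((d:ℕ):ℝ)/α by ring]
        rw [hpow, hc]
        have h10 : t ^ (-((d:ℝ)/α)) * t ^ ((d:ℝ)/α) = 1 := by
          rw [← Real.rpow_add ht, show -((d:ℝ)/α) + (d:ℝ)/α = 0 by ring, Real.rpow_zero]
        linear_combination (2 ^ (α+κ-ζ) *
          ∫ (y : EuclideanSpace ℝ (Fin d)), (1 + ‖y‖) ^ (-(α + κ - ζ))) * h10


noncomputable def Ci (d : ℕ) (α κ ζ : ℝ) : ℝ :=
  2 ^ (α+κ-ζ) * (∫ y : EuclideanSpace ℝ (Fin d), (1 + ‖y‖) ^ (-(α+κ-ζ))) + 1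

lemma Ci_pos : 0 < Ci d α κ ζ := by
  have h : 0 ≤ ∫ y : EuclideanSpace ℝ (Fin d), (1 + ‖y‖) ^ (-(α+κ-ζ)) :=
    integral_nonneg fun y => Real.rpow_nonneg (by positivity) _
  unfold Ci
  positivity

lemma H_int' (hα : 0 < α) (hζ : 0 < ζ) (hmain : ζ < α + κ - (d:ℝ)) (ht : 0 < t) :
    (∫⁻ x, ENNReal.ofReal (H d α κ ζ t x)) ≤ ENNReal.ofReal (Ci d α κ ζ) :=
  (H_int hα hζ hmain ht).trans (ENNReal.ofReal_le_ofReal (by unfold Ci; linarith))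

lemma key (hα : 0 < α) (hζ : 0 < ζ) (hκ1 : (d:ℝ) - α < κ) (hmain : ζ < α + κ - (d:ℝ))
    {r s : ℝ} (x : EuclideanSpace ℝ (Fin d)) (hr : 0 < r) (hs : 0 < s) (hsr : s ≤ r) :
    (∫⁻ z, ENNReal.ofReal (H d α κ ζ r (x - z) * H d α κ ζ s z)) ≤
      ENNReal.ofReal ((((2:ℝ) ^ (((d:ℝ)+ζ)/α) * 2 ^ (α+κ) + 2 ^ (α+κ)) * Ci d α κ ζ) *
        H d α κ ζ (r+s) x) := by
  set t := r + s with htdef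
  have ht : 0 < t := by positivity
  have hrt : r ≤ t := by simp [htdef]; linarith
  have ht2r : t ≤ 2*r := by simp [htdef]; linarith
  have hst : s ≤ t := by simp [htdef]; linarith
  set CA : ℝ := 2 ^ (((d:ℝ)+ζ)/α) * 2 ^ (α+κ) with hCAdef
  set CB : ℝ := (2:ℝ) ^ (α+κ) with hCBdef
  have hCA0 : 0 < CA := by positivity
  have hCB0 : 0 < CB := by positivity
  have hCi0 : 0 < Ci d α κ ζ := Ci_pos
  have hHt0 : 0 ≤ H d α κ ζ t x := H_nonneg ht x
  have hu : (0:ℝ) < t ^ (1/α) := Real.rpow_pos_of_pos ht _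
  by_cases hX : ‖x‖ ≤ 2 * t ^ (1/α)
  · have hA : ∀ w, H d α κ ζ r w ≤ CA * H d α κ ζ t x := by
      intro w
      apply lemA hα hζ hκ1 hmain hr hrt ht2r
      have h1 : M d α t x ≤ 2 := by
        apply max_le ?_ one_le_two
        rw [div_le_iff₀ hu]
        calc ‖x‖ ≤ 2 * t ^ (1/α) := hX
          _ = 2 * t ^ (1/α) := rfl
      have h2 := M_ge_one (α := α) r w
      linarith
    calc (∫⁻ z, ENNReal.ofReal (H d α κ ζ r (x - z) * H d α κ ζ s z))
        ≤ ∫⁻ z, ENNReal.ofReal ((CA * H d α κ ζ t x) * H d α κ ζ s z) :=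
          lintegral_mono fun z => ENNReal.ofReal_le_ofReal
            (mul_le_mul_of_nonneg_right (hA _) (H_nonneg hs z))
      _ = ENNReal.ofReal (CA * H d α κ ζ t x) * ∫⁻ z, ENNReal.ofReal (H d α κ ζ s z) := by
          simp_rw [ENNReal.ofReal_mul (mul_nonneg hCA0.le hHt0)]
          exact lintegral_const_mul' _ _ ENNReal.ofReal_ne_top
      _ ≤ ENNReal.ofReal (CA * H d α κ ζ t x) * ENNReal.ofReal (Ci d α κ ζ) :=
          mul_le_mul_right (H_int' hα hζ hmain hs) _
      _ ≤ ENNReal.ofReal (((CA + CB) * Ci d α κ ζ) * H d α κ ζ t x) := by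
          rw [← ENNReal.ofReal_mul (mul_nonneg hCA0.le hHt0)]
          apply ENNReal.ofReal_le_ofReal
          nlinarith [mul_nonneg (mul_nonneg hCB0.le hCi0.le) hHt0]
  · push_neg at hX
    set A : Set (EuclideanSpace ℝ (Fin d)) := {z | ‖z‖ ≤ ‖x‖/2} with hAdef
    have hAm : MeasurableSet A := measurableSet_le (by fun_prop) measurable_const
    rw [← lintegral_add_compl
      (fun z => ENNReal.ofReal (H d α κ ζ r (x - z) * H d α κ ζ s z)) hAm]
    have part1 : (∫⁻ z in A, ENNReal.ofReal (H d α κ ζ r (x - z) * H d α κ ζ s z)) ≤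
        ENNReal.ofReal (CA * H d α κ ζ t x) * ENNReal.ofReal (Ci d α κ ζ) := by
      have hA1 : ∀ z ∈ A, H d α κ ζ r (x - z) ≤ CA * H d α κ ζ t x := by
        intro z hz
        simp only [hAdef, Set.mem_setOf_eq] at hz
        apply lemA hα hζ hκ1 hmain hr hrt ht2r
        have hw : ‖x‖ ≤ 2 * ‖x - z‖ := by
          have h0 := norm_sub_norm_le x z
          linarith
        have hru : (0:ℝ) < r ^ (1/α) := Real.rpow_pos_of_pos hr _
        have hrtu : r ^ (1/α) ≤ t ^ (1/α) := Real.rpow_le_rpow hr.le hrt (by positivity)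
        apply max_le
        · calc ‖x‖ / t ^ (1/α) ≤ 2 * ‖x - z‖ / t ^ (1/α) := by gcongr
            _ ≤ 2 * ‖x - z‖ / r ^ (1/α) := by gcongr
            _ = 2 * (‖x - z‖ / r ^ (1/α)) := by ring
            _ ≤ 2 * M d α r (x - z) := by
                have := div_le_M (α := α) r (x - z); linarith
        · have := M_ge_one (α := α) r (x - z); linarith
      calc (∫⁻ z in A, ENNReal.ofReal (H d α κ ζ r (x - z) * H d α κ ζ s z))
          ≤ ∫⁻ z in A, ENNReal.ofReal ((CA * H d α κ ζ t x) * H d α κ ζ s z) :=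
            setLIntegral_mono' hAm fun z hz => ENNReal.ofReal_le_ofReal
              (mul_le_mul_of_nonneg_right (hA1 z hz) (H_nonneg hs z))
        _ = ENNReal.ofReal (CA * H d α κ ζ t x) * ∫⁻ z in A, ENNReal.ofReal (H d α κ ζ s z) := by
            simp_rw [ENNReal.ofReal_mul (mul_nonneg hCA0.le hHt0)]
            exact lintegral_const_mul' _ _ ENNReal.ofReal_ne_top
        _ ≤ ENNReal.ofReal (CA * H d α κ ζ t x) * ∫⁻ z, ENNReal.ofReal (H d α κ ζ s z) :=
            mul_le_mul_right (setLIntegral_le_lintegral _ _) _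
        _ ≤ ENNReal.ofReal (CA * H d α κ ζ t x) * ENNReal.ofReal (Ci d α κ ζ) :=
            mul_le_mul_right (H_int' hα hζ hmain hs) _
    have part2 : (∫⁻ z in Aᶜ, ENNReal.ofReal (H d α κ ζ r (x - z) * H d α κ ζ s z)) ≤
        ENNReal.ofReal (CB * H d α κ ζ t x) * ENNReal.ofReal (Ci d α κ ζ) := by
      have hB1 : ∀ z ∈ Aᶜ, H d α κ ζ s z ≤ CB * H d α κ ζ t x := by
        intro z hz
        simp only [hAdef, Set.mem_compl_iff, Set.mem_setOf_eq, not_le] at hz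
        have hus : (0:ℝ) < s ^ (1/α) := Real.rpow_pos_of_pos hs _
        apply lemB hα hζ hmain hs hst
        · linarith
        · have h1 : ‖z‖ ≤ s ^ (1/α) * M d α s z := by
            have h2 := div_le_M (α := α) s z
            calc ‖z‖ = (‖z‖ / s ^ (1/α)) * s ^ (1/α) := by field_simp
              _ ≤ M d α s z * s ^ (1/α) := mul_le_mul_of_nonneg_right h2 hus.le
              _ = s ^ (1/α) * M d α s z := by ring
          linarith
      calc (∫⁻ z in Aᶜ, ENNReal.ofReal (H d α κ ζ r (x - z) * H d α κ ζ s z))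
          ≤ ∫⁻ z in Aᶜ, ENNReal.ofReal ((CB * H d α κ ζ t x) * H d α κ ζ r (x - z)) :=
            setLIntegral_mono' hAm.compl fun z hz => ENNReal.ofReal_le_ofReal (by
              calc H d α κ ζ r (x - z) * H d α κ ζ s z
                  ≤ H d α κ ζ r (x - z) * (CB * H d α κ ζ t x) :=
                    mul_le_mul_of_nonneg_left (hB1 z hz) (H_nonneg hr _)
                _ = (CB * H d α κ ζ t x) * H d α κ ζ r (x - z) := by ring)
        _ ≤ ∫⁻ z, ENNReal.ofReal ((CB * H d α κ ζ t x) * H d α κ ζ r (x - z)) :=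
            setLIntegral_le_lintegral _ _
        _ = ENNReal.ofReal (CB * H d α κ ζ t x) * ∫⁻ z, ENNReal.ofReal (H d α κ ζ r (x - z)) := by
            simp_rw [ENNReal.ofReal_mul (mul_nonneg hCB0.le hHt0)]
            exact lintegral_const_mul' _ _ ENNReal.ofReal_ne_top
        _ = ENNReal.ofReal (CB * H d α κ ζ t x) * ∫⁻ w, ENNReal.ofReal (H d α κ ζ r w) := by
            congr 1
            exact (Measure.measurePreserving_sub_left
              (volume : Measure (EuclideanSpace ℝ (Fin d))) x).lintegral_comp
              (ENNReal.measurable_ofReal.comp (measurable_H r))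
        _ ≤ ENNReal.ofReal (CB * H d α κ ζ t x) * ENNReal.ofReal (Ci d α κ ζ) :=
            mul_le_mul_right (H_int' hα hζ hmain hr) _
    calc (∫⁻ z in A, ENNReal.ofReal (H d α κ ζ r (x - z) * H d α κ ζ s z)) +
          ∫⁻ z in Aᶜ, ENNReal.ofReal (H d α κ ζ r (x - z) * H d α κ ζ s z)
        ≤ ENNReal.ofReal (CA * H d α κ ζ t x) * ENNReal.ofReal (Ci d α κ ζ) +
          ENNReal.ofReal (CB * H d α κ ζ t x) * ENNReal.ofReal (Ci d α κ ζ) :=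
          add_le_add part1 part2
      _ = ENNReal.ofReal ((CA * H d α κ ζ t x) * Ci d α κ ζ) +
          ENNReal.ofReal ((CB * H d α κ ζ t x) * Ci d α κ ζ) := by
          rw [← ENNReal.ofReal_mul (mul_nonneg hCA0.le hHt0),
            ← ENNReal.ofReal_mul (mul_nonneg hCB0.le hHt0)]
      _ = ENNReal.ofReal ((CA * H d α κ ζ t x) * Ci d α κ ζ +
          (CB * H d α κ ζ t x) * Ci d α κ ζ) := by
          rw [ENNReal.ofReal_add (by positivity) (by positivity)]
      _ = ENNReal.ofReal (((CA + CB) * Ci d α κ ζ) * H d α κ ζ t x) := by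
          congr 1; ring

end HP

open HP in
theorem H_subconvolution (d : ℕ) (α κ ζ : ℝ) (hα0 : 0 < α) (hα2 : α < 2)
    (hκ1 : (d : ℝ) - α < κ) (hκ2 : κ ≤ (d : ℝ)) (hζ : 0 < ζ)
    (hmain : ζ < α + κ - (d : ℝ)) :
    ∃ C_H > (0 : ℝ), ∃ C > (0 : ℝ),
      (∀ (s t : ℝ) (x : EuclideanSpace ℝ (Fin d)), 0 < s → s < t →
        (∫⁻ z, ENNReal.ofReal (H d α κ ζ (t - s) (x - z) * H d α κ ζ s z)) ≤
          ENNReal.ofReal (C_H * H d α κ ζ t x)) ∧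
      (∀ t : ℝ, 0 < t →
        (∫⁻ x, ENNReal.ofReal (H d α κ ζ t x)) ≤ ENNReal.ofReal C) := by
  have hCi0 : 0 < Ci d α κ ζ := Ci_pos
  refine ⟨((2:ℝ) ^ (((d:ℝ)+ζ)/α) * 2 ^ (α+κ) + 2 ^ (α+κ)) * Ci d α κ ζ, by positivity,
    Ci d α κ ζ, hCi0, ?_, fun t ht => H_int' hα0 hζ hmain ht⟩
  intro s t x hs hst
  have hr : 0 < t - s := sub_pos.mpr hst
  rcases le_total s (t - s) with h | h
  · have hk := key hα0 hζ hκ1 hmain x hr hs h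
    rwa [show t - s + s = t by ring] at hk
  · have heq : (∫⁻ z, ENNReal.ofReal (H d α κ ζ (t - s) (x - z) * H d α κ ζ s z)) =
        ∫⁻ w, ENNReal.ofReal (H d α κ ζ s (x - w) * H d α κ ζ (t - s) w) := by
      have hmeas : Measurable fun w : EuclideanSpace ℝ (Fin d) =>
          ENNReal.ofReal (H d α κ ζ s (x - w) * H d α κ ζ (t - s) w) :=
        ENNReal.measurable_ofReal.comp
          (((measurable_H s).comp (measurable_const.sub measurable_id)).mul
            (measurable_H (t - s)))
      rw [← (Measure.measurePreserving_sub_left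
        (volume : Measure (EuclideanSpace ℝ (Fin d))) x).lintegral_comp hmeas]
      congr 1
      funext z
      rw [sub_sub_cancel, mul_comm]
    rw [heq]
    have hk := key hα0 hζ hκ1 hmain x hs hr h
    rwa [show s + (t - s) = t by ring] at hk
end
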